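/- Let I ⊆ ℝ be an open interval with 0 ∉ I, let α, β, c ∈ ℂ, and let y, z : I → ℂ be differentiable functions satisfying the P_III system with parameters (α, β, c), with y nonvanishing on I. Then y is twice differentiable on I and satisfies the Painlevé III′ equation y″ = (y′)²/y − y′/s + (y³ + 2β·y²)/s² + 2c(2α+1)/s − 4c²/y. In particular, for c = 1/2 this is the Painlevé III′ equation y″ = (y′)²/y − y′/s + y²(c₃y + c₁)/(4s²) + c₂/(4s) + c₄/(4y) with (c₁, c₂, c₃, c₄) = (8β, 4(2α+1), 4, −4). -/

import Mathlib

/-- The P_III system with parameters `(α, β, c)`. -/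
def PIIIsys (α β c : ℂ) (I : Set ℝ) (y z : ℝ → ℂ) : Prop :=
  ∀ s ∈ I,
    (s : ℂ) * deriv y s
      = 2 * (y s) ^ 2 * z s - (y s) ^ 2 - 2 * α * y s + 2 * c * (s : ℂ) ∧
    (s : ℂ) * deriv z s
      = -2 * y s * (z s) ^ 2 + 2 * y s * z s + 2 * α * z s + β - α

/-! Near `s ∈ I` the first equation reads `y' = u / s` with `u = 2y²z - y² - 2αy + 2cs`
differentiable, so `y'` is differentiable and `s y'' = u' - y'`. In `u'` the first equation
eliminates `z` and the second eliminates `z'`, which leaves Painlevé III′. -/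

open Filter Topology

def PIII'Rhs {K : Type*} [Field K] (α β c s y y' : K) : K :=
  y' ^ 2 / y - y' / s + (y ^ 3 + 2 * β * y ^ 2) / s ^ 2 + 2 * c * (2 * α + 1) / s - 4 * c ^ 2 / y

theorem PIII'Rhs_eq_of_system {K : Type*} [Field K] {α β c s y y' z z' : K}
    (hs : s ≠ 0) (hy : y ≠ 0)
    (hy' : s * y' = 2 * y ^ 2 * z - y ^ 2 - 2 * α * y + 2 * c * s)
    (hz' : s * z' = -2 * y * z ^ 2 + 2 * y * z + 2 * α * z + β - α) :
    (2 * (2 * y * y' * z + y ^ 2 * z') - 2 * y * y' - 2 * α * y' + 2 * c - y') / s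
      = PIII'Rhs α β c s y y' := by
  unfold PIII'Rhs
  field_simp
  linear_combination (2 * y ^ 3) * hz' - (s * y' - 2 * y ^ 2 * z + y ^ 2 + 2 * c * s) * hy'

theorem PIII'Rhs_one_half {K : Type*} [Field K] [CharZero K] (α β s y y' : K) :
    PIII'Rhs α β (1 / 2) s y y'
      = y' ^ 2 / y - y' / s + y ^ 2 * (4 * y + 8 * β) / (4 * s ^ 2)
          + 4 * (2 * α + 1) / (4 * s) + (-4) / (4 * y) := by
  unfold PIII'Rhs
  ring

theorem hasDerivAt_ofReal (s : ℝ) : HasDerivAt (fun t : ℝ => (t : ℂ)) 1 s := by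
  simpa using (hasDerivAt_id s).ofReal_comp

theorem hasDerivAt_deriv_of_mul_deriv_eventuallyEq {f u : ℝ → ℂ} {u' : ℂ} {s : ℝ} (hs : s ≠ 0)
    (hu : HasDerivAt u u' s) (hfu : ∀ᶠ t : ℝ in 𝓝 s, (t : ℂ) * deriv f t = u t) :
    HasDerivAt (deriv f) ((u' - deriv f s) / s) s := by
  have hs' : (s : ℂ) ≠ 0 := Complex.ofReal_ne_zero.mpr hs
  have hderiv : deriv f =ᶠ[𝓝 s] fun t => u t / t := by
    filter_upwards [hfu, eventually_ne_nhds hs] with t ht ht0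
    rw [← ht, mul_div_cancel_left₀ _ (Complex.ofReal_ne_zero.mpr ht0)]
  refine ((hu.div (hasDerivAt_ofReal s) hs').congr_of_eventuallyEq hderiv).congr_deriv ?_
  rw [← hfu.self_of_nhds]
  field_simp

theorem PIIIsys.hasDerivAt_deriv {α β c : ℂ} {I : Set ℝ} {y z : ℝ → ℂ}
    (hsys : PIIIsys α β c I y z) {s : ℝ} (hI : I ∈ 𝓝 s) (hs : s ≠ 0)
    (hy : DifferentiableAt ℝ y s) (hz : DifferentiableAt ℝ z s) (hys : y s ≠ 0) :
    HasDerivAt (deriv y) (PIII'Rhs α β c s (y s) (deriv y s)) s := by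
  have hu : HasDerivAt (fun t => 2 * y t ^ 2 * z t - y t ^ 2 - 2 * α * y t + 2 * c * t)
      (2 * (2 * y s * deriv y s * z s + y s ^ 2 * deriv z s) - 2 * y s * deriv y s
        - 2 * α * deriv y s + 2 * c) s := by
    have hy2 := hy.hasDerivAt.fun_pow 2
    refine ((((hy2.const_mul 2).fun_mul hz.hasDerivAt).fun_sub hy2).fun_sub
      (hy.hasDerivAt.const_mul (2 * α))).fun_add ((hasDerivAt_ofReal s).const_mul (2 * c))
      |>.congr_deriv ?_
    push_cast
    ring
  have hsys_s := hsys s (mem_of_mem_nhds hI)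
  refine (hasDerivAt_deriv_of_mul_deriv_eventuallyEq hs hu ?_).congr_deriv
    (PIII'Rhs_eq_of_system (Complex.ofReal_ne_zero.mpr hs) hys hsys_s.1 hsys_s.2)
  filter_upwards [hI] with t ht using (hsys t ht).1

theorem PIII_system_gives_PIII'
    (I : Set ℝ) (hI : IsOpen I) (hI0 : (0 : ℝ) ∉ I)
    (α β c : ℂ) (y z : ℝ → ℂ)
    (hy : DifferentiableOn ℝ y I) (hz : DifferentiableOn ℝ z I)
    (hsys : PIIIsys α β c I y z)
    (hy0 : ∀ s ∈ I, y s ≠ 0) :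
    (∀ s ∈ I, DifferentiableAt ℝ (deriv y) s) ∧
    (∀ s ∈ I, deriv (deriv y) s
      = (deriv y s) ^ 2 / y s - deriv y s / (s : ℂ)
        + ((y s) ^ 3 + 2 * β * (y s) ^ 2) / (s : ℂ) ^ 2
        + 2 * c * (2 * α + 1) / (s : ℂ) - 4 * c ^ 2 / y s) ∧
    (c = 1 / 2 →
      ∀ s ∈ I, deriv (deriv y) s
        = (deriv y s) ^ 2 / y s - deriv y s / (s : ℂ)
          + (y s) ^ 2 * (4 * y s + 8 * β) / (4 * (s : ℂ) ^ 2)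
          + 4 * (2 * α + 1) / (4 * (s : ℂ)) + (-4) / (4 * y s)) := by
  have hPIII' : ∀ s ∈ I, HasDerivAt (deriv y) (PIII'Rhs α β c s (y s) (deriv y s)) s :=
    fun s hs => hsys.hasDerivAt_deriv (hI.mem_nhds hs) (ne_of_mem_of_not_mem hs hI0)
      ((hy s hs).differentiableAt (hI.mem_nhds hs)) ((hz s hs).differentiableAt (hI.mem_nhds hs))
      (hy0 s hs)
  refine ⟨fun s hs => (hPIII' s hs).differentiableAt, fun s hs => (hPIII' s hs).deriv,
    fun hc s hs => ?_⟩
  rw [(hPIII' s hs).deriv, hc, PIII'Rhs_one_half]
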